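/- arXiv:2510.22901 — 7 statements merged into one kernel-verified Lean document; each statement's English description precedes it below -/
import Mathlib

section
/- Let X be a path-connected Hausdorff space containing a closed path-connected subspace A such that X \ A can be deformed within X to a discrete subspace of X, i.e., there is a continuous map H : (X \ A) × [0,1] → X with H(x,0) = x for all x ∈ X \ A and with H(−,1) taking values in a discrete subspace of X. Then cat(X) ≤ cat(A) + 1. -/
open Set unitInterval Topology

/-- A point `x` of a topological space `X` is a *wild point* of `X` if every neighborhood `U`
of `x` contains a loop that is not null-homotopic in `X`. -/
def IsWildPoint {X : Type*} [TopologicalSpace X] (x : X) : Prop :=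
  ∀ U ∈ 𝓝 x, ∃ (y : X) (γ : Path y y), Set.range ⇑γ ⊆ U ∧ ¬ γ.Homotopic (Path.refl y)

/-- The set of wild points of `X`. -/
def wildSet (X : Type*) [TopologicalSpace X] : Set X := {x | IsWildPoint x}

/-- Iterated wild sets: `iterWild X 0 = X` and `iterWild X (n+1) = w(iterWild X n)`,
where the wild set of the subspace is taken with the subspace topology. -/
def iterWild (X : Type*) [TopologicalSpace X] : ℕ → Set X
  | 0 => Set.univ
  | n + 1 => Subtype.val '' wildSet ↥(iterWild X n)

/-- The wildness rank of `X`: the least `n` with `iterWild X n = ∅`, and `⊤` if none exists. -/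
noncomputable def wildRank (X : Type*) [TopologicalSpace X] : ℕ∞ :=
  sInf ((↑) '' {n : ℕ | iterWild X n = ∅})

/-- `X` is `w`-stable if every iterated wild set is locally path-connected. -/
def WStable (X : Type*) [TopologicalSpace X] : Prop :=
  ∀ n : ℕ, LocPathConnectedSpace ↥(iterWild X n)

/-- `X` has Lebesgue covering dimension at most one: every open cover admits an open
refinement which covers `X` and in which every point lies in at most two members. -/
def DimLEOne (X : Type*) [TopologicalSpace X] : Prop :=
  ∀ 𝒰 : Set (Set X), (∀ U ∈ 𝒰, IsOpen U) → ⋃₀ 𝒰 = Set.univ →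
    ∃ 𝒱 : Set (Set X), (∀ V ∈ 𝒱, IsOpen V) ∧ ⋃₀ 𝒱 = Set.univ ∧
      (∀ V ∈ 𝒱, ∃ U ∈ 𝒰, V ⊆ U) ∧
      ∀ x : X, ∃ V₁ V₂ : Set X, ∀ V ∈ 𝒱, x ∈ V → V = V₁ ∨ V = V₂

/-- A subset `A ⊆ X` is categorical in `X` if the inclusion `A → X` is homotopic to a
constant map. -/
def IsCategorical (X : Type*) [TopologicalSpace X] (A : Set X) : Prop :=
  ∃ y : X, ContinuousMap.Homotopic
    (⟨Subtype.val, continuous_subtype_val⟩ : C(↥A, X)) (ContinuousMap.const ↥A y)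

/-- `A ⊆ X × X` admits a motion plan in `X` if the two coordinate projections `A → X`
are homotopic. -/
def AdmitsMotionPlan (X : Type*) [TopologicalSpace X] (A : Set (X × X)) : Prop :=
  ContinuousMap.Homotopic
    (⟨fun p : A => (p : X × X).1, continuous_fst.comp continuous_subtype_val⟩ : C(↥A, X))
    (⟨fun p : A => (p : X × X).2, continuous_snd.comp continuous_subtype_val⟩ : C(↥A, X))

/-- The normalized Lusternik–Schnirelmann category of `X`, defined via closed filtrations
`∅ = F₋₁ ⊆ F 0 ⊆ ⋯ ⊆ F n = X` with categorical differences. -/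
noncomputable def LSCat (X : Type*) [TopologicalSpace X] : ℕ∞ :=
  sInf ((↑) '' {n : ℕ | ∃ F : ℕ → Set X, Monotone F ∧ (∀ j, IsClosed (F j)) ∧
    F n = Set.univ ∧ IsCategorical X (F 0) ∧ ∀ j < n, IsCategorical X (F (j + 1) \ F j)})

/-- The normalized topological complexity of `X`, defined via closed filtrations of `X × X`
whose differences admit motion plans. -/
noncomputable def TopComplexity (X : Type*) [TopologicalSpace X] : ℕ∞ :=
  sInf ((↑) '' {n : ℕ | ∃ F : ℕ → Set (X × X), Monotone F ∧ (∀ j, IsClosed (F j)) ∧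
    F n = Set.univ ∧ AdmitsMotionPlan X (F 0) ∧ ∀ j < n, AdmitsMotionPlan X (F (j + 1) \ F j)})

/-- The relative LS-category `cat_X(A)` defined via filtrations of `A` by subsets closed in `A`
whose differences are categorical in `X`. -/
noncomputable def relCat (X : Type*) [TopologicalSpace X] (A : Set X) : ℕ∞ :=
  sInf ((↑) '' {n : ℕ | ∃ F : ℕ → Set X, Monotone F ∧ (∀ j, F j ⊆ A) ∧
    (∀ j, IsClosed ((Subtype.val ⁻¹' F j : Set ↥A))) ∧ F n = A ∧
    IsCategorical X (F 0) ∧ ∀ j < n, IsCategorical X (F (j + 1) \ F j)})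

/-- A simple closed curve in `X` is a subspace homeomorphic to the circle. -/
def IsSimpleClosedCurve {X : Type*} [TopologicalSpace X] (S : Set X) : Prop :=
  Nonempty (↥S ≃ₜ Circle)

/-- A continuous map is `π₁`-injective if every based loop whose image is null-homotopic is
itself null-homotopic (equivalently, the induced homomorphism on fundamental groups is
injective at every basepoint). -/
def Pi1Injective {X Y : Type*} [TopologicalSpace X] [TopologicalSpace Y] (f : C(X, Y)) : Prop :=
  ∀ (x : X) (γ : Path x x), (γ.map f.continuous).Homotopic (Path.refl (f x)) →
    γ.Homotopic (Path.refl x)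

/-!
The closed filtration of `A` realising `cat(A)` stays closed in `X` because `A` is closed, and its
pieces stay categorical in `X`. Appending `X` as a last step adds the piece `X \ A`, which is
categorical: it deforms into a discrete set `D`, and the inclusion of `D` is null-homotopic
because in a path-connected space every point of `D` can be moved to a base point along a path,
with no continuity constraint across the discrete set.
-/

open ContinuousMap

section Categorical

variable {X : Type*} [TopologicalSpace X]

theorem isCategorical_iff_nullhomotopic {S : Set X} :
    IsCategorical X S ↔ (⟨Subtype.val, continuous_subtype_val⟩ : C(S, X)).Nullhomotopic :=
  Iff.rfl

theorem isCategorical_of_discreteTopology [PathConnectedSpace X] (D : Set X)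
    [DiscreteTopology D] : IsCategorical X D := by
  obtain ⟨y⟩ : Nonempty X := PathConnectedSpace.nonempty
  let γ : C(D, C(I, X)) := ⟨fun d => PathConnectedSpace.somePath (d : X) y, by fun_prop⟩
  exact ⟨y, ⟨{ toContinuousMap := γ.uncurry.comp .prodSwap
               map_zero_left := fun d => by simp [γ]
               map_one_left := fun d => by simp [γ] }⟩⟩

theorem nullhomotopic_of_forall_mem_of_isCategorical {Y : Type*} [TopologicalSpace Y]
    {S : Set X} (hS : IsCategorical X S) (f : C(Y, X)) (hf : ∀ y, f y ∈ S) :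
    f.Nullhomotopic :=
  Nullhomotopic.comp_left hS ⟨fun y => ⟨f y, hf y⟩, f.continuous.codRestrict hf⟩

theorem isCategorical_of_deform {U S : Set X} (H : C(U × I, X)) (h0 : ∀ x : U, H (x, 0) = x)
    (hS : IsCategorical X S) (h1 : ∀ x : U, H (x, 1) ∈ S) : IsCategorical X U := by
  let H₁ : C(U, X) := ⟨fun x => H (x, 1), by fun_prop⟩
  obtain ⟨y, hy⟩ := nullhomotopic_of_forall_mem_of_isCategorical hS H₁ h1
  have hdeform : Homotopic ⟨Subtype.val, continuous_subtype_val⟩ H₁ :=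
    ⟨{ toContinuousMap := H.comp .prodSwap
       map_zero_left := h0
       map_one_left := fun _ => rfl }⟩
  exact ⟨y, hdeform.trans hy⟩

theorem IsCategorical.image_of_isEmbedding {Y : Type*} [TopologicalSpace Y] {f : Y → X}
    (hf : Topology.IsEmbedding f) {S : Set Y} (hS : IsCategorical Y S) :
    IsCategorical X (f '' S) := by
  let e := hf.homeomorphImage S
  have := (Nullhomotopic.comp_right hS ⟨f, hf.continuous⟩).comp_left (e.symm : C(f '' S, S))
  rw [isCategorical_iff_nullhomotopic]
  convert this using 1
  ext p
  exact congrArg Subtype.val (e.apply_symm_apply p).symm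

theorem lscat_le_of_filtration (F : ℕ → Set X) (n : ℕ) (hmono : Monotone F)
    (hclosed : ∀ j, IsClosed (F j)) (htop : F n = univ) (h0 : IsCategorical X (F 0))
    (hsucc : ∀ j < n, IsCategorical X (F (j + 1) \ F j)) : LSCat X ≤ n :=
  sInf_le ⟨n, ⟨F, hmono, hclosed, htop, h0, hsucc⟩, rfl⟩

theorem lscat_le_lscat_add_one_of_isCategorical_compl {A : Set X} (hA : IsClosed A)
    (hAc : IsCategorical X Aᶜ) : LSCat X ≤ LSCat A + 1 := by
  rw [← tsub_le_iff_right]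
  refine le_sInf ?_
  rintro _ ⟨n, ⟨F, hmono, hclosed, htop, h0, hsucc⟩, rfl⟩
  rw [tsub_le_iff_right]
  have hval (S : Set A) : IsCategorical A S → IsCategorical X ((↑) '' S) :=
    IsCategorical.image_of_isEmbedding .subtypeVal
  let G : ℕ → Set X := fun j => if j ≤ n then (↑) '' F j else univ
  have hG : ∀ j ≤ n, G j = (↑) '' F j := fun j hj => if_pos hj
  have hlast : G (n + 1) = univ := if_neg (by omega)
  refine mod_cast lscat_le_of_filtration G (n + 1) ?_ ?_ hlast ?_ ?_
  · intro j k hjk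
    simp only [G]
    split_ifs <;> first | exact image_mono (hmono hjk) | exact subset_univ _ | omega
  · intro j
    simp only [G]
    split_ifs
    exacts [hA.isClosedMap_subtype_val _ (hclosed j), isClosed_univ]
  · rw [hG 0 (Nat.zero_le n)]
    exact hval _ h0
  · intro j hj
    rcases Nat.lt_succ_iff_lt_or_eq.1 hj with hj | rfl
    · rw [hG j hj.le, hG (j + 1) hj, ← image_sdiff Subtype.val_injective]
      exact hval _ (hsucc j hj)
    · rw [hG j le_rfl, htop, Subtype.coe_image_univ, hlast, ← compl_eq_univ_sdiff]
      exact hAc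

end Categorical

theorem lscat_le_of_deform_to_discrete_general (X : Type*) [TopologicalSpace X]
    [PathConnectedSpace X] (A : Set X) (hAcl : IsClosed A)
    (H : C(↥Aᶜ × unitInterval, X))
    (h0 : ∀ x : ↥Aᶜ, H (x, 0) = (x : X))
    (h1 : ∃ D : Set X, DiscreteTopology ↥D ∧ ∀ x : ↥Aᶜ, H (x, 1) ∈ D) :
    LSCat X ≤ LSCat ↥A + 1 := by
  obtain ⟨D, _, hHD⟩ := h1
  exact lscat_le_lscat_add_one_of_isCategorical_compl hAcl
    (isCategorical_of_deform H h0 (isCategorical_of_discreteTopology D) hHD)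

/-- If `A ⊆ X` is a closed path-connected subspace such that `X \ A` can be deformed within `X`
to a discrete subspace of `X`, then `cat(X) ≤ cat(A) + 1`. -/
theorem lscat_le_of_deform_to_discrete (X : Type*) [TopologicalSpace X] [T2Space X]
    [PathConnectedSpace X] (A : Set X) (hAcl : IsClosed A) (hApc : IsPathConnected A)
    (H : C(↥Aᶜ × unitInterval, X))
    (h0 : ∀ x : ↥Aᶜ, H (x, 0) = (x : X))
    (h1 : ∃ D : Set X, DiscreteTopology ↥D ∧ ∀ x : ↥Aᶜ, H (x, 1) ∈ D) :
    LSCat X ≤ LSCat ↥A + 1 :=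
  lscat_le_of_deform_to_discrete_general X A hAcl H h0 h1
end

section
/- For arbitrary path-connected Hausdorff spaces X and Y, cat(X × Y) ≤ cat(X) + cat(Y). -/
/-!
A filtration with categorical strata is the same thing as a lower semicontinuous rank function
`r : X → ℕ` whose level sets are categorical (`F j = {r ≤ j}`). Given ranks `rX` and `rY`, the sum
`rX x + rY y` is again lower semicontinuous, and on each of its level sets the summand `rX x` is
locally constant: both summands can only jump up nearby, while their sum is fixed. So a level set
splits into relatively open pieces, each lying in a product of categorical strata, and the
contractions of the pieces glue, since path-connectedness lets them all end at one point.
-/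

open Set unitInterval Topology

open ContinuousMap

namespace ContinuousMap

variable {Z X : Type*} [TopologicalSpace Z] [TopologicalSpace X]

theorem Nullhomotopic.homotopic_const [PathConnectedSpace X] {f : C(Z, X)}
    (hf : f.Nullhomotopic) (y : X) : f.Homotopic (const Z y) :=
  let ⟨x, hx⟩ := hf
  hx.trans ⟨(PathConnectedSpace.somePath x y).toHomotopyConst⟩

theorem homotopic_const_of_isLocallyConstant {ι : Type*} {c : Z → ι} (hc : IsLocallyConstant c)
    {f : C(Z, X)} {y : X} (hf : ∀ i, (f.restrict (c ⁻¹' {i})).Homotopic (const _ y)) :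
    f.Homotopic (const Z y) := by
  let H i := (hf i).some
  let S i : Set (I × Z) := univ ×ˢ (c ⁻¹' {i})
  let φ i : C(S i, X) := (H i).toContinuousMap.comp
    ⟨fun q => (q.1.1, ⟨q.1.2, q.2.2⟩), by fun_prop⟩
  have hφ : ∀ i j q (hi : q ∈ S i) (hj : q ∈ S j), φ i ⟨q, hi⟩ = φ j ⟨q, hj⟩ := by
    rintro i j q hi hj
    obtain rfl : i = j := hi.2.symm.trans hj.2
    rfl
  have hS : ∀ q, ∃ i, S i ∈ 𝓝 q := fun q =>
    ⟨c q.2, prod_mem_nhds Filter.univ_mem ((hc.isOpen_fiber _).mem_nhds rfl)⟩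
  have hlift : ∀ t z, liftCover S φ hφ hS (t, z) = H (c z) (t, ⟨z, rfl⟩) := fun t z =>
    liftCover_coe (i := c z) (⟨(t, z), trivial, rfl⟩ : S (c z))
  exact ⟨{ toContinuousMap := liftCover S φ hφ hS
           map_zero_left := fun z => by simp [hlift]
           map_one_left := fun z => by simp [hlift] }⟩

end ContinuousMap

section Categorical

variable {Z X Y : Type*} [TopologicalSpace Z] [TopologicalSpace X] [TopologicalSpace Y]

theorem IsCategorical.nullhomotopic_of_range_subset {S : Set X} (hS : IsCategorical X S)
    {f : C(Z, X)} (hf : range f ⊆ S) : f.Nullhomotopic :=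
  Nullhomotopic.comp_left hS ⟨codRestrict f S fun z => hf ⟨z, rfl⟩, f.continuous.codRestrict _⟩

theorem IsCategorical.mono {S T : Set X} (hT : IsCategorical X T) (hST : S ⊆ T) :
    IsCategorical X S :=
  hT.nullhomotopic_of_range_subset (f := ⟨Subtype.val, continuous_subtype_val⟩)
    (Subtype.range_val.trans_subset hST)

theorem IsCategorical.prod {S : Set X} {T : Set Y} (hS : IsCategorical X S)
    (hT : IsCategorical Y T) : IsCategorical (X × Y) (S ×ˢ T) := by
  obtain ⟨x, hx⟩ := hS.nullhomotopic_of_range_subset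
    (f := (fst : C(X × Y, X)).comp (⟨Subtype.val, continuous_subtype_val⟩ : C(↥(S ×ˢ T), X × Y)))
    (by rintro _ ⟨p, rfl⟩; exact p.2.1)
  obtain ⟨y, hy⟩ := hT.nullhomotopic_of_range_subset
    (f := (snd : C(X × Y, Y)).comp (⟨Subtype.val, continuous_subtype_val⟩ : C(↥(S ×ˢ T), X × Y)))
    (by rintro _ ⟨p, rfl⟩; exact p.2.2)
  exact ⟨(x, y), hx.prodMk hy⟩

end Categorical

theorem LowerSemicontinuous.eventually_ge_nat {Z : Type*} [TopologicalSpace Z] {f : Z → ℕ}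
    (hf : LowerSemicontinuous f) (z : Z) : ∀ᶠ w in 𝓝 z, f z ≤ f w := by
  rcases Nat.eq_zero_or_pos (f z) with h | h
  · exact Filter.Eventually.of_forall fun w => h ▸ Nat.zero_le _
  · filter_upwards [hf z (f z - 1) (by omega)] with w hw
    omega

theorem isLocallyConstant_of_add_eq {Z : Type*} [TopologicalSpace Z] {f g : Z → ℕ} {k : ℕ}
    (hf : LowerSemicontinuous f) (hg : LowerSemicontinuous g) (hfg : ∀ z, f z + g z = k) :
    IsLocallyConstant f := by
  refine (IsLocallyConstant.iff_eventually_eq f).2 fun z => ?_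
  filter_upwards [hf.eventually_ge_nat z, hg.eventually_ge_nat z] with w hfw hgw
  have hz := hfg z
  have hw := hfg w
  omega

section LSCat

variable {X Y : Type*} [TopologicalSpace X] [TopologicalSpace Y]

theorem lsCat_le_iff {n : ℕ} : LSCat X ≤ n ↔ ∃ r : X → ℕ, LowerSemicontinuous r ∧
    (∀ x, r x ≤ n) ∧ ∀ k, IsCategorical X {x | r x = k} := by
  constructor
  · intro h
    obtain ⟨_, ⟨m, ⟨F, hFmono, hFclosed, hFm, hF0, hFsucc⟩, rfl⟩, hmn⟩ :=
      sInf_lt_iff.1 (h.trans_lt (ENat.natCast_lt_natCast.2 n.lt_succ_self))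
    replace hmn : m ≤ n := Nat.lt_succ_iff.1 (ENat.natCast_lt_natCast.1 hmn)
    have hex : ∀ x, ∃ i, x ∈ F i := fun x => ⟨m, hFm ▸ mem_univ x⟩
    classical
    let r x := Nat.find (hex x)
    have hr : ∀ x j, r x ≤ j ↔ x ∈ F j := fun x j => (Nat.find_le_iff (hex x) j).trans
      ⟨fun ⟨i, hij, hi⟩ => hFmono hij hi, fun hj => ⟨j, le_rfl, hj⟩⟩
    have hrm : ∀ x, r x ≤ m := fun x => (hr x m).2 (hFm ▸ mem_univ x)
    refine ⟨r, lowerSemicontinuous_iff_isClosed_preimage.2 fun j => ?_,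
      fun x => (hrm x).trans hmn, fun k => ?_⟩
    · convert hFclosed j
      exact ext fun x => hr x j
    rcases k with _ | k
    · convert hF0
      exact ext fun x => (Nat.le_zero.symm.trans (hr x 0))
    by_cases hk : k < m
    · convert hFsucc k hk
      ext x
      simp only [mem_ofPred_eq, mem_sdiff, ← hr]
      omega
    · exact hF0.mono fun x (hx : r x = k + 1) => absurd (hrm x) (by omega)
  · rintro ⟨r, hr, hrn, hcat⟩
    refine sInf_le ⟨n, ⟨fun j => r ⁻¹' Iic j, fun i j hij x hx => le_trans hx hij,
      hr.isClosed_preimage, eq_univ_of_forall hrn, ?_, fun j _ => ?_⟩, rfl⟩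
    · convert hcat 0 using 2
      ext x
      simp
    · convert hcat (j + 1) using 2
      ext x
      simp only [mem_sdiff, mem_preimage, mem_Iic, not_le, mem_ofPred_eq]
      omega

theorem isCategorical_setOf_add_eq [PathConnectedSpace X] [PathConnectedSpace Y]
    {rX : X → ℕ} {rY : Y → ℕ} (hrX : LowerSemicontinuous rX) (hrY : LowerSemicontinuous rY)
    (hX : ∀ i, IsCategorical X {x | rX x = i}) (hY : ∀ j, IsCategorical Y {y | rY y = j})
    (k : ℕ) : IsCategorical (X × Y) {p | rX p.1 + rY p.2 = k} := by
  obtain ⟨x⟩ := ‹PathConnectedSpace X›.nonempty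
  obtain ⟨y⟩ := ‹PathConnectedSpace Y›.nonempty
  set A := {p : X × Y | rX p.1 + rY p.2 = k}
  have hc : IsLocallyConstant fun p : A => rX p.1.1 :=
    isLocallyConstant_of_add_eq (g := fun p : A => rY p.1.2)
      (hrX.comp (continuous_fst.comp continuous_subtype_val))
      (hrY.comp (continuous_snd.comp continuous_subtype_val)) fun p => p.2
  refine ⟨(x, y), homotopic_const_of_isLocallyConstant hc fun i => ?_⟩
  refine (((hX i).prod (hY (k - i))).nullhomotopic_of_range_subset ?_).homotopic_const _
  rintro _ ⟨⟨⟨p, hp⟩, hpi⟩, rfl⟩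
  have hp' : rX p.1 + rY p.2 = k := hp
  have hpi' : rX p.1 = i := hpi
  exact ⟨hpi', show rY p.2 = k - i by omega⟩

end LSCat

theorem lscat_prod_le_general (X Y : Type*) [TopologicalSpace X] [TopologicalSpace Y]
    [PathConnectedSpace X] [PathConnectedSpace Y] :
    LSCat (X × Y) ≤ LSCat X + LSCat Y := by
  induction hX : LSCat X using ENat.recTopCoe with
  | top => simp
  | coe n =>
  induction hY : LSCat Y using ENat.recTopCoe with
  | top => simp
  | coe m =>
  obtain ⟨rX, hrX, hrXn, hcatX⟩ := lsCat_le_iff.1 hX.le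
  obtain ⟨rY, hrY, hrYm, hcatY⟩ := lsCat_le_iff.1 hY.le
  exact_mod_cast lsCat_le_iff.2 ⟨fun p : X × Y => rX p.1 + rY p.2,
    (hrX.comp continuous_fst).add (hrY.comp continuous_snd),
    fun p : X × Y => add_le_add (hrXn p.1) (hrYm p.2),
    isCategorical_setOf_add_eq hrX hrY hcatX hcatY⟩

/-- Product inequality for the LS-category: `cat(X × Y) ≤ cat(X) + cat(Y)`. -/
theorem lscat_prod_le (X Y : Type*) [TopologicalSpace X] [TopologicalSpace Y]
    [T2Space X] [T2Space Y] [PathConnectedSpace X] [PathConnectedSpace Y] :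
    LSCat (X × Y) ≤ LSCat X + LSCat Y :=
  lscat_prod_le_general X Y
end

section
/- For an arbitrary path-connected Hausdorff space X, cat(X) ≤ TC(X) ≤ cat(X × X). -/
open Set unitInterval Topology

/-!
Restricting a motion plan on `A ⊆ X × X` to the slice `{x | (x, x₀) ∈ A}` deforms that slice
into `x₀`; conversely, a deformation of `A` into a point `(y₁, y₂)` of `X × X`, followed by a
path from `y₁` to `y₂`, is a homotopy between the two projections. So every filtration witnessing
`TC(X) ≤ n` restricts to one witnessing `cat(X) ≤ n`, and every filtration witnessing
`cat(X × X) ≤ n` already witnesses `TC(X) ≤ n`.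
-/

section

variable {X : Type*} [TopologicalSpace X]

theorem AdmitsMotionPlan.isCategorical_preimage {A : Set (X × X)} (h : AdmitsMotionPlan X A)
    (x₀ : X) : IsCategorical X ((fun x => (x, x₀)) ⁻¹' A) := by
  have hslice : Continuous fun z : ↥((fun x => (x, x₀)) ⁻¹' A) => (⟨(z.1, x₀), z.2⟩ : ↥A) :=
    (continuous_subtype_val.prodMk continuous_const).subtype_mk _
  exact ⟨x₀, h.comp (ContinuousMap.Homotopic.refl ⟨_, hslice⟩)⟩

theorem IsCategorical.admitsMotionPlan [PathConnectedSpace X] {A : Set (X × X)}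
    (h : IsCategorical (X × X) A) : AdmitsMotionPlan X A := by
  obtain ⟨y, hy⟩ := h
  have hfst := (ContinuousMap.Homotopic.refl ContinuousMap.fst).comp hy
  have hsnd := (ContinuousMap.Homotopic.refl ContinuousMap.snd).comp hy
  have hconst : (ContinuousMap.const ↥A y.1).Homotopic (ContinuousMap.const ↥A y.2) :=
    ⟨(PathConnectedSpace.somePath y.1 y.2).toHomotopyConst⟩
  exact (hfst.trans hconst).trans hsnd.symm

theorem lsCat_le_topComplexity [Nonempty X] : LSCat X ≤ TopComplexity X := by
  refine sInf_le_sInf (image_mono ?_)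
  rintro n ⟨F, hmono, hclosed, hn, h0, hstep⟩
  let x₀ : X := Classical.arbitrary X
  have hslice : Continuous fun x : X => (x, x₀) := continuous_id.prodMk continuous_const
  refine ⟨fun j => (fun x => (x, x₀)) ⁻¹' F j, fun _ _ hij => preimage_mono (hmono hij),
    fun j => (hclosed j).preimage hslice, by simp only [hn, preimage_univ],
    h0.isCategorical_preimage x₀, fun j hj => ?_⟩
  rw [← preimage_sdiff]
  exact (hstep j hj).isCategorical_preimage x₀

theorem topComplexity_le_lsCat_prod [PathConnectedSpace X] :
    TopComplexity X ≤ LSCat (X × X) := by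
  refine sInf_le_sInf (image_mono ?_)
  rintro n ⟨F, hmono, hclosed, hn, h0, hstep⟩
  exact ⟨F, hmono, hclosed, hn, h0.admitsMotionPlan, fun j hj => (hstep j hj).admitsMotionPlan⟩

end

theorem lscat_le_tc_le_lscat_prod_general (X : Type*) [TopologicalSpace X]
    [PathConnectedSpace X] :
    LSCat X ≤ TopComplexity X ∧ TopComplexity X ≤ LSCat (X × X) :=
  ⟨lsCat_le_topComplexity, topComplexity_le_lsCat_prod⟩

/-- `cat(X) ≤ TC(X) ≤ cat(X × X)` for a path-connected Hausdorff space `X`. -/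
theorem lscat_le_tc_le_lscat_prod (X : Type*) [TopologicalSpace X] [T2Space X]
    [PathConnectedSpace X] :
    LSCat X ≤ TopComplexity X ∧ TopComplexity X ≤ LSCat (X × X) :=
  lscat_le_tc_le_lscat_prod_general X
end

section
/- For arbitrary path-connected Hausdorff spaces X and Y, TC(X × Y) ≤ TC(X) + TC(Y). -/
open Set unitInterval Topology

theorem plan_empty {Z : Type*} [TopologicalSpace Z] : AdmitsMotionPlan Z (∅ : Set (Z × Z)) := by
  have : (⟨fun p : (∅ : Set (Z×Z)) => (p : Z × Z).1, continuous_fst.comp continuous_subtype_val⟩ : C(↥(∅ : Set (Z×Z)), Z)) =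
      ⟨fun p => (p : Z × Z).2, continuous_snd.comp continuous_subtype_val⟩ :=
    ContinuousMap.ext fun p => absurd p.2 (Set.notMem_empty _)
  unfold AdmitsMotionPlan
  rw [this]

theorem plan_mono {Z : Type*} [TopologicalSpace Z] {A B : Set (Z × Z)} (hAB : A ⊆ B)
    (hB : AdmitsMotionPlan Z B) : AdmitsMotionPlan Z A := by
  obtain ⟨H⟩ := hB
  exact ⟨⟨⟨fun q => H (q.1, ⟨q.2.1, hAB q.2.2⟩),
    H.continuous.comp (continuous_fst.prodMk
      ((continuous_subtype_val.comp continuous_snd).subtype_mk _))⟩,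
    fun p => H.apply_zero _, fun p => H.apply_one _⟩⟩

def swMap {X Y : Type*} (p : (X × Y) × (X × Y)) : (X × X) × (Y × Y) :=
  ((p.1.1, p.2.1), (p.1.2, p.2.2))

theorem continuous_swMap {X Y : Type*} [TopologicalSpace X] [TopologicalSpace Y] :
    Continuous (swMap (X := X) (Y := Y)) := by unfold swMap; fun_prop

theorem plan_prod {X Y : Type*} [TopologicalSpace X] [TopologicalSpace Y]
    {A : Set (X × X)} {B : Set (Y × Y)}
    (hA : AdmitsMotionPlan X A) (hB : AdmitsMotionPlan Y B) :
    AdmitsMotionPlan (X × Y) (swMap ⁻¹' (A ×ˢ B)) := by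
  obtain ⟨HA⟩ := hA
  obtain ⟨HB⟩ := hB
  refine ⟨⟨⟨fun q => (HA (q.1, ⟨(swMap q.2.1).1, q.2.2.1⟩), HB (q.1, ⟨(swMap q.2.1).2, q.2.2.2⟩)), ?_⟩, ?_, ?_⟩⟩
  · apply Continuous.prodMk
    · exact HA.continuous.comp (continuous_fst.prodMk
        (((continuous_fst.comp continuous_swMap).comp
          (continuous_subtype_val.comp continuous_snd)).subtype_mk _))
    · exact HB.continuous.comp (continuous_fst.prodMk
        (((continuous_snd.comp continuous_swMap).comp
          (continuous_subtype_val.comp continuous_snd)).subtype_mk _))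
  · intro p
    have h1 := HA.apply_zero (⟨(swMap p.1).1, p.2.1⟩ : ↥A)
    have h2 := HB.apply_zero (⟨(swMap p.1).2, p.2.2⟩ : ↥B)
    simp only [ContinuousMap.coe_mk] at h1 h2 ⊢
    rw [h1, h2]; rfl
  · intro p
    have h1 := HA.apply_one (⟨(swMap p.1).1, p.2.1⟩ : ↥A)
    have h2 := HB.apply_one (⟨(swMap p.1).2, p.2.2⟩ : ↥B)
    simp only [ContinuousMap.coe_mk] at h1 h2 ⊢
    rw [h1, h2]; rfl
theorem plan_glue {Z : Type*} [TopologicalSpace Z] {D : Set (Z × Z)} {N : ℕ}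
    {P : ℕ → Set (Z × Z)}
    (hsub : ∀ i, i < N → P i ⊆ D)
    (hcov : ∀ p ∈ D, ∃ i, i < N ∧ p ∈ P i)
    (hdisj : ∀ i, i < N → ∀ j, j < N → i ≠ j → Disjoint (P i) (P j))
    (hopen : ∀ i, i < N → IsOpen ((Subtype.val ⁻¹' P i : Set ↥D)))
    (hplan : ∀ i, i < N → AdmitsMotionPlan Z (P i)) :
    AdmitsMotionPlan Z D := by
  classical
  -- choose homotopies
  have hH : ∀ i, i < N → ContinuousMap.Homotopy
      (⟨fun p : P i => (p : Z × Z).1, continuous_fst.comp continuous_subtype_val⟩ : C(↥(P i), Z))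
      (⟨fun p : P i => (p : Z × Z).2, continuous_snd.comp continuous_subtype_val⟩ : C(↥(P i), Z)) :=
    fun i hi => (hplan i hi).some
  -- index function
  have hidx : ∀ p : ↥D, ∃ i, i < N ∧ (p : Z × Z) ∈ P i := fun p => hcov p.1 p.2
  let idx : ↥D → ℕ := fun p => (hidx p).choose
  have hidx1 : ∀ p : ↥D, idx p < N := fun p => (hidx p).choose_spec.1
  have hidx2 : ∀ p : ↥D, (p : Z × Z) ∈ P (idx p) := fun p => (hidx p).choose_spec.2
  have hidxu : ∀ (p : ↥D) (j : ℕ), j < N → (p : Z × Z) ∈ P j → idx p = j := by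
    intro p j hj hpj
    by_contra hne
    exact (hdisj _ (hidx1 p) _ hj hne).le_bot ⟨hidx2 p, hpj⟩ 
  -- the glued homotopy
  refine ⟨⟨⟨fun q => hH (idx q.2) (hidx1 q.2) (q.1, ⟨q.2.1, hidx2 q.2⟩), ?_⟩, ?_, ?_⟩⟩
  · rw [continuous_iff_continuousAt]
    intro q
    obtain ⟨i, hiN, hqi⟩ := hidx q.2
    have hU : IsOpen ((univ : Set I) ×ˢ (Subtype.val ⁻¹' P i : Set ↥D)) :=
      isOpen_univ.prod (hopen i hiN)
    apply ContinuousOn.continuousAt ?_ (hU.mem_nhds ⟨trivial, hqi⟩)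
    rw [continuousOn_iff_continuous_restrict]
    have hcont : Continuous (fun u : ↥((univ : Set I) ×ˢ (Subtype.val ⁻¹' P i : Set ↥D)) =>
        hH i hiN ((u : I × ↥D).1, ⟨((u : I × ↥D).2 : Z × Z), u.2.2⟩)) := by
      apply (hH i hiN).continuous.comp
      exact (continuous_fst.comp continuous_subtype_val).prodMk
        ((continuous_subtype_val.comp (continuous_snd.comp continuous_subtype_val)).subtype_mk _)
    apply hcont.congr
    rintro ⟨u, hu⟩
    have hui : idx u.2 = i := hidxu _ i hiN hu.2
    subst hui
    rfl
  · intro p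
    exact (hH (idx p) (hidx1 p)).apply_zero _
  · intro p
    exact (hH (idx p) (hidx1 p)).apply_one _

theorem exists_prod_filtration {X Y : Type*} [TopologicalSpace X] [TopologicalSpace Y]
    {n m : ℕ} {F : ℕ → Set (X × X)} {G : ℕ → Set (Y × Y)}
    (hFmono : Monotone F) (hFcl : ∀ j, IsClosed (F j)) (hFn : F n = Set.univ)
    (hF0 : AdmitsMotionPlan X (F 0)) (hFd : ∀ j < n, AdmitsMotionPlan X (F (j + 1) \ F j))
    (hGmono : Monotone G) (hGcl : ∀ j, IsClosed (G j)) (hGm : G m = Set.univ)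
    (hG0 : AdmitsMotionPlan Y (G 0)) (hGd : ∀ j < m, AdmitsMotionPlan Y (G (j + 1) \ G j)) :
    ∃ H : ℕ → Set ((X × Y) × (X × Y)), Monotone H ∧ (∀ j, IsClosed (H j)) ∧
      H (n + m) = Set.univ ∧ AdmitsMotionPlan (X × Y) (H 0) ∧
      ∀ j < n + m, AdmitsMotionPlan (X × Y) (H (j + 1) \ H j) := by
  classical
  set F' : ℕ → Set (X × X) := fun j => F (min j n) with hF'
  set G' : ℕ → Set (Y × Y) := fun j => G (min j m) with hG'
  have hF'mono : Monotone F' := fun a b hab => hFmono (min_le_min hab le_rfl)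
  have hG'mono : Monotone G' := fun a b hab => hGmono (min_le_min hab le_rfl)
  have hF'top : ∀ j, n ≤ j → F' j = Set.univ := fun j h => by
    simp only [hF', min_eq_right h, hFn]
  have hG'top : ∀ j, m ≤ j → G' j = Set.univ := fun j h => by
    simp only [hG', min_eq_right h, hGm]
  -- plans for the differences of F' and G'
  have hF'plan : ∀ i : ℕ, AdmitsMotionPlan X (if i = 0 then F' 0 else F' i \ F' (i - 1)) := by
    intro i
    match i with
    | 0 => simpa [hF'] using hF0
    | (i + 1) =>
      simp only [Nat.add_sub_cancel, if_neg (Nat.succ_ne_zero i)]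
      by_cases hi : i < n
      · have h1 : min (i + 1) n = i + 1 := min_eq_left hi
        have h2 : min i n = i := min_eq_left hi.le
        simp only [hF', h1, h2]
        exact hFd i hi
      · push_neg at hi
        have : F' (i + 1) \ F' i = ∅ := by
          rw [hF'top _ (by omega), hF'top _ hi, Set.diff_self]
        rw [this]
        exact plan_empty
  have hG'plan : ∀ i : ℕ, AdmitsMotionPlan Y (if i = 0 then G' 0 else G' i \ G' (i - 1)) := by
    intro i
    match i with
    | 0 => simpa [hG'] using hG0
    | (i + 1) =>
      simp only [Nat.add_sub_cancel, if_neg (Nat.succ_ne_zero i)]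
      by_cases hi : i < m
      · have h1 : min (i + 1) m = i + 1 := min_eq_left hi
        have h2 : min i m = i := min_eq_left hi.le
        simp only [hG', h1, h2]
        exact hGd i hi
      · push_neg at hi
        have : G' (i + 1) \ G' i = ∅ := by
          rw [hG'top _ (by omega), hG'top _ hi, Set.diff_self]
        rw [this]
        exact plan_empty
  -- the combined filtration
  set H : ℕ → Set ((X × Y) × (X × Y)) :=
    fun k => ⋃ i ∈ Finset.range (k + 1), swMap ⁻¹' (F' i ×ˢ G' (k - i)) with hHdef
  have hmemH : ∀ k p, p ∈ H k ↔ ∃ i ≤ k, swMap p ∈ F' i ×ˢ G' (k - i) := by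
    intro k p
    simp only [hHdef, Set.mem_iUnion, Finset.mem_range, Set.mem_preimage, Nat.lt_succ_iff,
      exists_prop]
  refine ⟨H, ?_, ?_, ?_, ?_, ?_⟩
  · -- Monotone
    intro a b hab p hp
    rw [hmemH] at hp ⊢
    obtain ⟨i, hik, h1, h2⟩ := hp
    exact ⟨i, hik.trans hab, h1, hG'mono (Nat.sub_le_sub_right hab i) h2⟩
  · -- Closed
    intro k
    apply Set.Finite.isClosed_biUnion (Finset.finite_toSet _)
    intro i _
    exact ((hFcl _).prod (hGcl _)).preimage continuous_swMap
  · -- H (n+m) = univ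
    ext p
    simp only [Set.mem_univ, iff_true, hmemH]
    refine ⟨n, by omega, ?_, ?_⟩
    · rw [hF'top n le_rfl]; trivial
    · rw [hG'top (n + m - n) (by omega)]; trivial
  · -- plan on H 0
    have h0 : H 0 = swMap ⁻¹' (F' 0 ×ˢ G' 0) := by
      ext p
      rw [hmemH]
      constructor
      · rintro ⟨i, hi, h⟩
        obtain rfl : i = 0 := by omega
        exact h
      · intro h; exact ⟨0, le_rfl, h⟩
    rw [h0]
    exact plan_prod (by simpa [hF'] using hF0) (by simpa [hG'] using hG0)
  · -- plans on differences
    intro k _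
    set D : Set ((X × Y) × (X × Y)) := H (k + 1) \ H k with hDdef
    set P : ℕ → Set ((X × Y) × (X × Y)) :=
      fun i => D ∩ swMap ⁻¹' (F' i ×ˢ G' (k + 1 - i)) with hPdef
    have hPsub : ∀ i, P i ⊆ D := fun i => Set.inter_subset_left
    have hcov : ∀ p ∈ D, ∃ i, i < k + 2 ∧ p ∈ P i := by
      intro p hp
      obtain ⟨i, hik, h⟩ := (hmemH (k + 1) p).1 hp.1
      exact ⟨i, by omega, hp, h⟩
    have hdisj' : ∀ i j, i < j → j < k + 2 → Disjoint (P i) (P j) := by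
      intro i j hij hj
      rw [Set.disjoint_left]
      rintro p ⟨hpD, hpi⟩ ⟨-, hpj⟩
      apply hpD.2
      rw [hmemH]
      refine ⟨i, by omega, hpi.1, ?_⟩
      exact hG'mono (show k + 1 - j ≤ k - i by omega) hpj.2
    have hdisj : ∀ i, i < k + 2 → ∀ j, j < k + 2 → i ≠ j → Disjoint (P i) (P j) := by
      intro i hi j hj hne
      rcases Nat.lt_or_ge i j with h | h
      · exact hdisj' i j h hj
      · exact (hdisj' j i (by omega) hi).symm
    have hPclosed : ∀ i, IsClosed ((Subtype.val ⁻¹' P i : Set ↥D)) := by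
      intro i
      have : (Subtype.val ⁻¹' P i : Set ↥D)
          = Subtype.val ⁻¹' (swMap ⁻¹' (F' i ×ˢ G' (k + 1 - i))) := by
        ext d
        simp only [Set.mem_preimage, hPdef, Set.mem_inter_iff, d.2, true_and]
      rw [this]
      exact (((hFcl _).prod (hGcl _)).preimage continuous_swMap).preimage continuous_subtype_val
    have hopen : ∀ i, i < k + 2 → IsOpen ((Subtype.val ⁻¹' P i : Set ↥D)) := by
      intro i hi
      rw [← isClosed_compl_iff]
      have hcompl : (Subtype.val ⁻¹' P i : Set ↥D)ᶜ
          = ⋃ j ∈ (Finset.range (k + 2)).erase i, (Subtype.val ⁻¹' P j : Set ↥D) := by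
        ext d
        simp only [Set.mem_compl_iff, Set.mem_preimage, Set.mem_iUnion, Finset.mem_erase,
          Finset.mem_range, exists_prop]
        constructor
        · intro hd
          obtain ⟨j, hj, hdj⟩ := hcov d.1 d.2
          exact ⟨j, ⟨fun h => hd (h ▸ hdj), hj⟩, hdj⟩
        · rintro ⟨j, ⟨hji, hj⟩, hdj⟩ hdi
          exact ((hdisj j hj i hi hji).le_bot ⟨hdj, hdi⟩)
      rw [hcompl]
      exact Set.Finite.isClosed_biUnion (Finset.finite_toSet _) fun j _ => hPclosed j
    have hplan : ∀ i, i < k + 2 → AdmitsMotionPlan (X × Y) (P i) := by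
      intro i hi
      apply plan_mono (B := swMap ⁻¹' ((if i = 0 then F' 0 else F' i \ F' (i - 1)) ×ˢ
        (if k + 1 - i = 0 then G' 0 else G' (k + 1 - i) \ G' (k + 1 - i - 1))))
      · rintro p ⟨hpD, hp1, hp2⟩
        have hnotk : p ∉ H k := hpD.2
        rw [hmemH] at hnotk
        push_neg at hnotk
        constructor
        · -- first coordinate
          by_cases hi0 : i = 0
          · simp only [hi0, if_pos rfl]; exact hi0 ▸ hp1
          · simp only [if_neg hi0]
            refine ⟨hp1, fun hmem => ?_⟩
            have := hnotk (i - 1) (by omega)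
            apply this ⟨hmem, ?_⟩
            have : k - (i - 1) = k + 1 - i := by omega
            rw [this]
            exact hp2
        · -- second coordinate
          by_cases hj0 : k + 1 - i = 0
          · simp only [hj0, if_pos rfl]; exact hj0 ▸ hp2
          · simp only [if_neg hj0]
            refine ⟨hp2, fun hmem => ?_⟩
            have := hnotk i (by omega)
            apply this ⟨hp1, ?_⟩
            have : k - i = k + 1 - i - 1 := by omega
            rw [this]
            exact hmem
      · exact plan_prod (hF'plan i) (hG'plan (k + 1 - i))
    exact plan_glue (fun i _ => hPsub i) hcov hdisj hopen hplan

theorem sInf_mem_of_ne_top {s : Set ℕ∞} (h : sInf s ≠ ⊤) : sInf s ∈ s := by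
  apply csInf_mem
  by_contra hs
  rw [Set.not_nonempty_iff_eq_empty] at hs
  simp [hs] at h


/-- Product inequality for topological complexity: `TC(X × Y) ≤ TC(X) + TC(Y)`. -/
theorem tc_prod_le (X Y : Type*) [TopologicalSpace X] [TopologicalSpace Y]
    [T2Space X] [T2Space Y] [PathConnectedSpace X] [PathConnectedSpace Y] :
    TopComplexity (X × Y) ≤ TopComplexity X + TopComplexity Y := by
  rcases eq_or_ne (TopComplexity X) ⊤ with hX | hX
  · rw [hX, top_add]; exact le_top
  rcases eq_or_ne (TopComplexity Y) ⊤ with hY | hY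
  · rw [hY, add_top]; exact le_top
  unfold TopComplexity at hX hY ⊢
  obtain ⟨n, hnS, hne⟩ := sInf_mem_of_ne_top hX
  obtain ⟨m, hmS, hme⟩ := sInf_mem_of_ne_top hY
  obtain ⟨F, hFmono, hFcl, hFn, hF0, hFd⟩ := hnS
  obtain ⟨G, hGmono, hGcl, hGm, hG0, hGd⟩ := hmS
  obtain ⟨H, h1, h2, h3, h4, h5⟩ :=
    exists_prod_filtration hFmono hFcl hFn hF0 hFd hGmono hGcl hGm hG0 hGd
  rw [← hne, ← hme, ← Nat.cast_add]
  exact sInf_le ⟨n + m, ⟨H, h1, h2, h3, h4, h5⟩, rfl⟩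
end

section
/- If X is a w-stable Peano continuum, then for all n ≥ 1, whenever wⁿ(X) is non-empty it has only finitely many connected components, and each of these components is a Peano continuum (i.e., connected, locally path-connected, compact and metrizable). -/
open Set unitInterval Topology

/-! A neighbourhood `U` of `x` in which every loop is null-homotopic is also a neighbourhood of
every point near `x`, so the non-wild points form an open set and `w(Y)` is closed. Hence every
`wⁿ(X)` is closed in the compact metrizable `X`, so compact and metrizable; being locally
path-connected by `w`-stability, it has open components, finitely many by compactness, and each
is a closed, hence compact, open, hence locally path-connected, subspace. -/

section Wild

variable {Y : Type*} [TopologicalSpace Y]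

lemma isOpen_compl_wildSet : IsOpen (wildSet Y)ᶜ := by
  refine isOpen_iff_eventually.2 fun x hx => ?_
  simp only [mem_compl_iff, wildSet, mem_ofPred_eq, IsWildPoint, not_forall, not_exists,
    not_and, not_not] at hx
  obtain ⟨U, hU, hnull⟩ := hx
  filter_upwards [eventually_mem_nhds_iff.2 hU] with y hUy hywild
  obtain ⟨z, γ, hγU, hγ⟩ := hywild U hUy
  exact hγ (hnull z γ hγU)

lemma isClosed_wildSet : IsClosed (wildSet Y) :=
  isOpen_compl_iff.1 isOpen_compl_wildSet

lemma isClosed_iterWild : ∀ n, IsClosed (iterWild Y n)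
  | 0 => isClosed_univ
  | n + 1 => (isClosed_iterWild n).isClosedEmbedding_subtypeVal.isClosedMap _
    (isClosed_wildSet (Y := iterWild Y n))

end Wild

lemma connectedComponent_isPeano {Y : Type*} [TopologicalSpace Y] [CompactSpace Y]
    [LocallyPathConnectedSpace Y] [TopologicalSpace.MetrizableSpace Y] (y : Y) :
    ConnectedSpace (connectedComponent y) ∧ LocallyPathConnectedSpace (connectedComponent y) ∧
      CompactSpace (connectedComponent y) ∧
      TopologicalSpace.MetrizableSpace (connectedComponent y) :=
  ⟨Subtype.connectedSpace isConnected_connectedComponent,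
    isOpen_connectedComponent.locallyPathConnectedSpace,
    isCompact_iff_compactSpace.1 isClosed_connectedComponent.isCompact, inferInstance⟩

theorem iterWild_components_peano_general (X : Type*) [TopologicalSpace X] [CompactSpace X]
    [TopologicalSpace.MetrizableSpace X]
    (hst : WStable X) (n : ℕ) :
    Finite (ConnectedComponents ↥(iterWild X n)) ∧
    ∀ x : ↥(iterWild X n),
      ConnectedSpace ↥(connectedComponent x) ∧
      LocPathConnectedSpace ↥(connectedComponent x) ∧
      CompactSpace ↥(connectedComponent x) ∧
      TopologicalSpace.MetrizableSpace ↥(connectedComponent x) := by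
  have : CompactSpace (iterWild X n) :=
    isCompact_iff_compactSpace.1 (isClosed_iterWild n).isCompact
  have : LocallyPathConnectedSpace (iterWild X n) := hst n
  exact ⟨inferInstance, connectedComponent_isPeano⟩

/-- If `X` is a `w`-stable Peano continuum, then for all `n ≥ 1`, whenever `wⁿ(X)` is nonempty
it has finitely many connected components, each of which is a Peano continuum. -/
theorem iterWild_components_peano (X : Type*) [TopologicalSpace X] [ConnectedSpace X]
    [LocallyPathConnectedSpace X] [CompactSpace X] [TopologicalSpace.MetrizableSpace X]
    (hst : WStable X) (n : ℕ) (hn : 1 ≤ n) (hne : (iterWild X n).Nonempty) :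
    Finite (ConnectedComponents ↥(iterWild X n)) ∧
    ∀ x : ↥(iterWild X n),
      ConnectedSpace ↥(connectedComponent x) ∧
      LocPathConnectedSpace ↥(connectedComponent x) ∧
      CompactSpace ↥(connectedComponent x) ∧
      TopologicalSpace.MetrizableSpace ↥(connectedComponent x) :=
  iterWild_components_peano_general X hst n
end

section
/- For arbitrary topological spaces X and Y, w(X × Y) = (X × w(Y)) ∪ (w(X) × Y). -/
open Set unitInterval Topology

/-- The wild set of a product: `w(X × Y) = X × w(Y) ∪ w(X) × Y`. -/
theorem wildSet_prod (X Y : Type*) [TopologicalSpace X] [TopologicalSpace Y] :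
    wildSet (X × Y) = (Set.univ ×ˢ wildSet Y) ∪ (wildSet X ×ˢ Set.univ) := by
  ext ⟨x, y⟩
  simp only [wildSet, mem_setOf_eq, mem_union, mem_prod, mem_univ, true_and, and_true]
  constructor
  · intro h
    by_contra hc
    push_neg at hc
    obtain ⟨hy, hx⟩ := hc
    simp only [IsWildPoint, not_forall, not_exists] at hx hy
    obtain ⟨U, hU, hUx⟩ := hx
    obtain ⟨V, hV, hVy⟩ := hy
    push_neg at hUx hVy
    obtain ⟨z, γ, hrange, hnot⟩ := h (U ×ˢ V) (prod_mem_nhds hU hV)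
    apply hnot
    have h1 : (γ.map continuous_fst).Homotopic (Path.refl z.1) := by
      apply hUx z.1
      rintro _ ⟨t, rfl⟩
      exact (hrange ⟨t, rfl⟩).1
    have h2 : (γ.map continuous_snd).Homotopic (Path.refl z.2) := by
      apply hVy z.2
      rintro _ ⟨t, rfl⟩
      exact (hrange ⟨t, rfl⟩).2
    obtain ⟨F1⟩ := h1
    obtain ⟨F2⟩ := h2
    refine ⟨((Path.Homotopic.prodHomotopy F1 F2).cast ?_ ?_ : _)⟩
    · ext t <;> rfl
    · ext t <;> rfl
  · rintro (hy | hx)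
    · intro W hW
      rw [nhds_prod_eq, Filter.mem_prod_iff] at hW
      obtain ⟨U, hU, V, hV, hUV⟩ := hW
      obtain ⟨z, δ, hrange, hnot⟩ := hy V hV
      refine ⟨(x, z), (Path.refl x).prod δ, ?_, ?_⟩
      · rintro _ ⟨t, rfl⟩
        exact hUV ⟨mem_of_mem_nhds hU, hrange ⟨t, rfl⟩⟩
      · intro ⟨F⟩
        apply hnot
        have h := Path.Homotopic.map ⟨F⟩ ⟨Prod.snd, continuous_snd⟩
        have e1 : ((Path.refl x).prod δ).map continuous_snd = δ := by ext t; rfl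
        have e2 : (Path.refl (x, z)).map (continuous_snd (X := X)) = Path.refl z := by
          ext t; rfl
        rwa [e1, e2] at h
    · intro W hW
      rw [nhds_prod_eq, Filter.mem_prod_iff] at hW
      obtain ⟨U, hU, V, hV, hUV⟩ := hW
      obtain ⟨z, δ, hrange, hnot⟩ := hx U hU
      refine ⟨(z, y), δ.prod (Path.refl y), ?_, ?_⟩
      · rintro _ ⟨t, rfl⟩
        exact hUV ⟨hrange ⟨t, rfl⟩, mem_of_mem_nhds hV⟩
      · intro ⟨F⟩
        apply hnot
        have h := Path.Homotopic.map ⟨F⟩ ⟨Prod.fst, continuous_fst⟩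
        have e1 : (δ.prod (Path.refl y)).map continuous_fst = δ := by ext t; rfl
        have e2 : (Path.refl (z, y)).map (continuous_fst (Y := Y)) = Path.refl z := by
          ext t; rfl
        rwa [e1, e2] at h
end

section
/- If f : X → Y and g : Y → X are continuous maps that are mutually inverse homotopy equivalences (g∘f is homotopic to the identity of X and f∘g is homotopic to the identity of Y), then f maps w(X) into w(Y), g maps w(Y) into w(X), and the restrictions f|_{w(X)} : w(X) → w(Y) and g|_{w(Y)} : w(Y) → w(X) are mutually inverse homotopy equivalences. -/
open Set unitInterval Topology

/-!
A π₁-injective map sends wild points to wild points: it carries arbitrarily small essential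
loops near `x` to arbitrarily small essential loops near `f x`. If `g ∘ f ≃ id`, then `f` is
π₁-injective; moreover every stage `H t` of a homotopy `H : g ∘ f ≃ id` is itself homotopic to
the identity, hence also preserves wild points, so `H` restricts to a homotopy on `w(X)`.
-/

namespace ContinuousMap

variable {X Y : Type*} [TopologicalSpace X] [TopologicalSpace Y]

def restrictMapsTo (f : C(X, Y)) {s : Set X} {t : Set Y} (h : MapsTo f s t) : C(s, t) :=
  ⟨h.restrict f s t, f.continuous.restrict h⟩

namespace Homotopy

variable {f₀ f₁ : C(X, Y)}

def restrictMapsTo (H : f₀.Homotopy f₁) {s : Set X} {t : Set Y}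
    (hH : ∀ τ, MapsTo (H.curry τ) s t) :
    (f₀.restrictMapsTo (H.curry_zero ▸ hH 0)).Homotopy
      (f₁.restrictMapsTo (H.curry_one ▸ hH 1)) where
  toFun p := ⟨H (p.1, p.2), hH p.1 p.2.2⟩
  continuous_toFun := (H.continuous.comp (continuous_fst.prodMk
    (continuous_subtype_val.comp continuous_snd))).subtype_mk _
  map_zero_left x := Subtype.ext (H.apply_zero x)
  map_one_left x := Subtype.ext (H.apply_one x)

def tail (H : f₀.Homotopy f₁) (τ : I) : (H.curry τ).Homotopy f₁ where
  toFun p := H (τ ⊔ p.1, p.2)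
  continuous_toFun :=
    H.continuous.comp ((continuous_const.max continuous_fst).prodMk continuous_snd)
  map_zero_left x := by simp
  map_one_left x := by simp [max_eq_right le_one']

end Homotopy

end ContinuousMap

section Pi1Injective

variable {X Y Z : Type*} [TopologicalSpace X] [TopologicalSpace Y] [TopologicalSpace Z]

open Path.Homotopic.Quotient in
theorem Pi1Injective.of_homotopic_id {h : C(X, X)} (hh : h.Homotopic (ContinuousMap.id X)) :
    Pi1Injective h := by
  obtain ⟨H⟩ := hh
  intro x γ hnull
  let δ : Path.Homotopic.Quotient (h x) x := mk (H.evalAt x)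
  -- naturality of the trajectory `δ` of `x` under `H`, with `h ∘ γ` null-homotopic
  have hδγ : δ.trans (mk γ) = δ := by
    have hsq := eq.mpr (Path.Homotopic.map_trans_evalAt H γ)
    rw [mk_trans, mk_trans, eq.mpr hnull, mk_refl, refl_trans] at hsq
    exact hsq.symm
  rw [← eq, mk_refl]
  calc mk γ = (δ.symm.trans δ).trans (mk γ) := by simp
    _ = refl x := by rw [trans_assoc, hδγ, symm_trans]

theorem Pi1Injective.of_comp {f : C(X, Y)} {g : C(Y, Z)} (hgf : Pi1Injective (g.comp f)) :
    Pi1Injective f :=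
  fun x γ hnull => hgf x γ (hnull.map g)

theorem Pi1Injective.mapsTo_wildSet {f : C(X, Y)} (hf : Pi1Injective f) :
    MapsTo f (wildSet X) (wildSet Y) := by
  intro x hx U hU
  obtain ⟨y, γ, hγU, hγ⟩ := hx (f ⁻¹' U) (f.continuous.continuousAt.preimage_mem_nhds hU)
  refine ⟨f y, γ.map f.continuous, ?_, fun hnull => hγ (hf y γ hnull)⟩
  rintro _ ⟨t, rfl⟩
  exact hγU ⟨t, rfl⟩

end Pi1Injective

namespace ContinuousMap

variable {X : Type*} [TopologicalSpace X]

theorem Homotopy.mapsTo_wildSet_curry {h : C(X, X)} (H : h.Homotopy (ContinuousMap.id X))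
    (τ : I) : MapsTo (H.curry τ) (wildSet X) (wildSet X) :=
  (Pi1Injective.of_homotopic_id ⟨H.tail τ⟩).mapsTo_wildSet

theorem Homotopic.restrictMapsTo_wildSet {h : C(X, X)} (hh : h.Homotopic (ContinuousMap.id X))
    (hw : MapsTo h (wildSet X) (wildSet X)) :
    (h.restrictMapsTo hw).Homotopic (ContinuousMap.id (wildSet X)) :=
  let ⟨H⟩ := hh
  ⟨H.restrictMapsTo H.mapsTo_wildSet_curry⟩

end ContinuousMap

/-- Mutually inverse homotopy equivalences restrict to mutually inverse homotopy equivalences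
between the wild sets. -/
theorem wildSet_restrict_homotopyEquiv (X Y : Type*) [TopologicalSpace X] [TopologicalSpace Y]
    (f : C(X, Y)) (g : C(Y, X))
    (hgf : (g.comp f).Homotopic (ContinuousMap.id X))
    (hfg : (f.comp g).Homotopic (ContinuousMap.id Y)) :
    ∃ (hf : Set.MapsTo f (wildSet X) (wildSet Y))
      (hg : Set.MapsTo g (wildSet Y) (wildSet X)),
      ((⟨Set.MapsTo.restrict g (wildSet Y) (wildSet X) hg,
            Continuous.restrict hg g.continuous⟩ : C(↥(wildSet Y), ↥(wildSet X))).comp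
          ⟨Set.MapsTo.restrict f (wildSet X) (wildSet Y) hf,
            Continuous.restrict hf f.continuous⟩).Homotopic
        (ContinuousMap.id ↥(wildSet X)) ∧
      ((⟨Set.MapsTo.restrict f (wildSet X) (wildSet Y) hf,
            Continuous.restrict hf f.continuous⟩ : C(↥(wildSet X), ↥(wildSet Y))).comp
          ⟨Set.MapsTo.restrict g (wildSet Y) (wildSet X) hg,
            Continuous.restrict hg g.continuous⟩).Homotopic
        (ContinuousMap.id ↥(wildSet Y)) := by
  have hf : MapsTo f (wildSet X) (wildSet Y) :=
    (Pi1Injective.of_homotopic_id hgf).of_comp.mapsTo_wildSet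
  have hg : MapsTo g (wildSet Y) (wildSet X) :=
    (Pi1Injective.of_homotopic_id hfg).of_comp.mapsTo_wildSet
  exact ⟨hf, hg, hgf.restrictMapsTo_wildSet (hg.comp hf), hfg.restrictMapsTo_wildSet (hf.comp hg)⟩
end
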